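/- Let ξ, ξ_1, ξ_2, … be i.i.d. random variables and (u_n) a nondecreasing real sequence. If P(ξ > u_n) → 0 and liminf_{n→∞} n·P(ξ > u_n) < ∞, then P(max_{1≤i≤n} ξ_i ≤ u_n infinitely often) = 1. -/

import Mathlib

/-!
Write `p n = P(ξ > uₙ)`. Along the infinitely many `n` with `n pₙ < C` and `pₙ ≤ 1/2`,
`P(max_{i<n} ξᵢ ≤ uₙ) = (1 - pₙ)ⁿ ≥ exp(-2C)`, so by reverse Fatou the event
`{max_{i<n} ξᵢ ≤ uₙ i.o.}` has positive probability. Since `uₙ` is nondecreasing and `pₙ → 0`,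
almost surely each `ξᵢ` eventually lies below `uₙ`; hence, up to a null set, the event does not
change when finitely many of the `ξᵢ` are ignored. It is therefore a.s. equal to a tail event,
and Kolmogorov's 0-1 law forces its probability to be `1`.
-/

open MeasureTheory ProbabilityTheory Filter

lemma Real.exp_neg_two_mul_le_one_sub {p : ℝ} (h0 : 0 ≤ p) (h2 : p ≤ 1 / 2) :
    Real.exp (-(2 * p)) ≤ 1 - p := by
  have hpos : 0 < 1 + 2 * p := by linarith
  calc Real.exp (-(2 * p)) = (Real.exp (2 * p))⁻¹ := Real.exp_neg _
    _ ≤ (1 + 2 * p)⁻¹ := by gcongr; linarith [Real.add_one_le_exp (2 * p)]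
    _ ≤ 1 - p := by rw [inv_le_iff_one_le_mul₀ hpos]; nlinarith

lemma ENNReal.ofReal_exp_neg_two_mul_le_one_sub_pow {p C : ENNReal} {n : ℕ} (hC : C ≠ ⊤)
    (hp : p ≤ 1 / 2) (hnp : n * p ≤ C) :
    ENNReal.ofReal (Real.exp (-(2 * C.toReal))) ≤ (1 - p) ^ n := by
  have hp_top : p ≠ ⊤ := ne_top_of_le_ne_top (by norm_num) hp
  have hp_half : p.toReal ≤ 1 / 2 := by
    simpa using ENNReal.toReal_mono (by norm_num) hp
  have hnp_real : n * p.toReal ≤ C.toReal := by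
    simpa using ENNReal.toReal_mono hC hnp
  rw [← ENNReal.ofReal_toReal hp_top, ← ENNReal.ofReal_one,
    ← ENNReal.ofReal_sub _ ENNReal.toReal_nonneg, ← ENNReal.ofReal_pow (by linarith)]
  refine ENNReal.ofReal_le_ofReal ?_
  calc Real.exp (-(2 * C.toReal)) ≤ Real.exp (-(2 * p.toReal)) ^ n := by
        rw [← Real.exp_nat_mul, Real.exp_le_exp]; linarith
    _ ≤ (1 - p.toReal) ^ n := by
        gcongr; exact Real.exp_neg_two_mul_le_one_sub ENNReal.toReal_nonneg hp_half

lemma exists_pos_frequently_le_one_sub_pow {p : ℕ → ENNReal} (h0 : Tendsto p atTop (nhds 0))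
    (hfin : liminf (fun n : ℕ => (n : ENNReal) * p n) atTop < ⊤) :
    ∃ δ > 0, ∃ᶠ n in atTop, δ ≤ (1 - p n) ^ n := by
  obtain ⟨C, hC_lt, hC_top⟩ := exists_between hfin
  have hfreq : ∃ᶠ n : ℕ in atTop, (n : ENNReal) * p n < C :=
    frequently_lt_of_liminf_lt (by isBoundedDefault) hC_lt
  have hsmall : ∀ᶠ n in atTop, p n ≤ 1 / 2 := h0.eventually (ge_mem_nhds (by norm_num))
  refine ⟨_, ENNReal.ofReal_pos.mpr (Real.exp_pos (-(2 * C.toReal))), ?_⟩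
  exact (hfreq.and_eventually hsmall).mono fun n ⟨hnp, hp⟩ =>
    ENNReal.ofReal_exp_neg_two_mul_le_one_sub_pow hC_top.ne hp hnp.le

lemma le_measure_limsup_of_frequently_le {α : Type*} [MeasurableSpace α] {μ : Measure α}
    [IsFiniteMeasure μ] {s : ℕ → Set α} (hs : ∀ n, MeasurableSet (s n)) {δ : ENNReal}
    (h : ∃ᶠ n in atTop, δ ≤ μ (s n)) : δ ≤ μ (limsup s atTop) := by
  have hanti : Antitone fun n => ⋃ i ≥ n, s i :=
    fun a b hab => Set.biUnion_mono (fun i hi => hab.trans hi) fun _ _ => le_rfl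
  rw [limsup_eq_iInf_iSup_of_nat]
  simp only [Set.iInf_eq_iInter, Set.iSup_eq_iUnion]
  rw [hanti.measure_iInter
    (fun n => (MeasurableSet.biUnion (Set.to_countable _) fun i _ => hs i).nullMeasurableSet)
    ⟨0, measure_ne_top _ _⟩]
  refine le_iInf fun n => ?_
  obtain ⟨k, hk, hδk⟩ := frequently_atTop.mp h n
  exact hδk.trans (measure_mono (Set.subset_biUnion_of_mem (u := s) hk))

section BlockEvent

variable {Ω β : Type*} (ξ : ℕ → Ω → β) (S : ℕ → Set β)

def blockEvent (m n : ℕ) : Set Ω := ⋂ i ∈ Finset.Ico m n, ξ i ⁻¹' S n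

variable {ξ S}

@[simp]
lemma mem_blockEvent {m n : ℕ} {ω : Ω} :
    ω ∈ blockEvent ξ S m n ↔ ∀ i, m ≤ i → i < n → ξ i ω ∈ S n := by
  simp [blockEvent, and_imp]

lemma blockEvent_subset_blockEvent {m m' : ℕ} (h : m ≤ m') (n : ℕ) :
    blockEvent ξ S m n ⊆ blockEvent ξ S m' n := fun _ hω => by
  simp only [mem_blockEvent] at hω ⊢
  exact fun i hi => hω i (h.trans hi)

lemma measurableSet_blockEvent [MeasurableSpace Ω] [MeasurableSpace β]
    (hξ : ∀ i, Measurable (ξ i)) (hS : ∀ n, MeasurableSet (S n)) (m n : ℕ) :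
    MeasurableSet (blockEvent ξ S m n) :=
  .biInter (Set.to_countable _) fun i _ => hξ i (hS n)

lemma measure_blockEvent_eq_pow [MeasurableSpace Ω] [MeasurableSpace β] {μ : Measure Ω}
    (hindep : iIndepFun ξ μ) (hident : ∀ i, IdentDistrib (ξ i) (ξ 0) μ μ)
    (hS : ∀ n, MeasurableSet (S n)) (m n : ℕ) :
    μ (blockEvent ξ S m n) = μ (ξ 0 ⁻¹' S n) ^ (n - m) := by
  rw [blockEvent, hindep.measure_inter_preimage_eq_mul _ fun i _ => hS n,
    Finset.prod_congr rfl fun i _ => (hident i).measure_mem_eq (hS n), Finset.prod_const,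
    Nat.card_Ico]

/-- Ignoring the first `m` variables only enlarges the event; the union over `m` is thus
measurable with respect to every `σ(ξ k, ξ (k+1), …)`. -/
lemma measurableSet_tail_iUnion_limsup_blockEvent [mβ : MeasurableSpace β]
    (hS : ∀ n, MeasurableSet (S n)) :
    MeasurableSet[limsup (fun i => mβ.comap (ξ i)) atTop]
      (⋃ m, limsup (fun n => blockEvent ξ S m n) atTop) := by
  rw [limsup_eq_iInf_iSup_of_nat, MeasurableSpace.measurableSet_iInf]
  intro k
  have hshift : ⋃ m, limsup (fun n => blockEvent ξ S m n) atTop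
      = ⋃ m, limsup (fun n => blockEvent ξ S (m + k) n) atTop :=
    subset_antisymm
      (Set.iUnion_mono fun m => limsup_le_limsup (Eventually.of_forall fun n =>
        blockEvent_subset_blockEvent (Nat.le_add_right m k) n))
      (Set.iUnion_subset fun m => Set.subset_iUnion_of_subset (m + k) le_rfl)
  rw [hshift]
  let M : MeasurableSpace Ω := ⨆ i ≥ k, mβ.comap (ξ i)
  refine @MeasurableSet.iUnion Ω ℕ M _ _ fun m => ?_
  refine @MeasurableSet.measurableSet_limsup Ω M _ fun n => ?_
  refine @MeasurableSet.biInter Ω ℕ M _ _ (Set.to_countable _) fun i hi => ?_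
  have hki : k ≤ i := (Nat.le_add_left k m).trans (Finset.mem_Ico.mp hi).1
  exact le_iSup₂ (f := fun i (_ : i ≥ k) => mβ.comap (ξ i)) i hki _ ⟨S n, hS n, rfl⟩

lemma mem_limsup_blockEvent_zero_of_mem (hS : Monotone S) {ω : Ω} (hω : ∀ i, ∃ k, ξ i ω ∈ S k)
    {m : ℕ} (hm : ω ∈ limsup (fun n => blockEvent ξ S m n) atTop) :
    ω ∈ limsup (fun n => blockEvent ξ S 0 n) atTop := by
  have hinit : ∀ᶠ n in atTop, ∀ i ∈ Finset.range m, ξ i ω ∈ S n := by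
    refine (eventually_all_finset _).mpr fun i _ => ?_
    obtain ⟨k, hk⟩ := hω i
    exact eventually_atTop.mpr ⟨k, fun n hn => hS hn hk⟩
  rw [mem_limsup_iff_frequently_mem] at hm ⊢
  refine (hm.and_eventually hinit).mono fun n ⟨hblock, hfirst⟩ => ?_
  simp only [mem_blockEvent, Finset.mem_range] at hblock hfirst ⊢
  intro i _ hin
  rcases lt_or_ge i m with him | him
  · exact hfirst i him
  · exact hblock i him hin

lemma limsup_blockEvent_zero_ae_eq_iUnion [MeasurableSpace Ω] {μ : Measure Ω} (hS : Monotone S)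
    (hcover : ∀ᵐ ω ∂μ, ∀ i, ∃ k, ξ i ω ∈ S k) :
    (limsup (fun n => blockEvent ξ S 0 n) atTop : Set Ω) =ᵐ[μ]
      ⋃ m, limsup (fun n => blockEvent ξ S m n) atTop := by
  refine (Set.subset_iUnion (fun m => limsup (fun n => blockEvent ξ S m n) atTop) 0)
    |>.eventuallyLE.antisymm (ae_le_set.mpr ?_)
  refine measure_mono_null (fun ω hω => ?_) (ae_iff.mp hcover)
  obtain ⟨hmem, hnot⟩ := hω
  obtain ⟨m, hm⟩ := Set.mem_iUnion.mp hmem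
  exact fun hω' => hnot (mem_limsup_blockEvent_zero_of_mem hS hω' hm)

lemma ae_forall_exists_mem_of_tendsto [MeasurableSpace Ω] [MeasurableSpace β] {μ : Measure Ω}
    (hident : ∀ i, IdentDistrib (ξ i) (ξ 0) μ μ) (hS : ∀ n, MeasurableSet (S n))
    (h0 : Tendsto (fun n => μ (ξ 0 ⁻¹' (S n)ᶜ)) atTop (nhds 0)) :
    ∀ᵐ ω ∂μ, ∀ i, ∃ k, ξ i ω ∈ S k := by
  refine ae_all_iff.mpr fun i => ae_iff.mpr (le_zero_iff.mp (ge_of_tendsto' h0 fun n => ?_))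
  rw [← (hident i).measure_mem_eq (hS n).compl]
  exact measure_mono fun ω hω hn => hω ⟨n, hn⟩

end BlockEvent

/-- Part of Klass's lemma: if `(uₙ)` is nondecreasing, `P(ξ > uₙ) → 0` and
`liminf n·P(ξ > uₙ) < ∞`, then `P(max_{1≤i≤n} ξᵢ ≤ uₙ  i.o.) = 1`. -/
theorem klass_io_one {Ω : Type*} [MeasureSpace Ω]
    [IsProbabilityMeasure (ℙ : Measure Ω)] (ξ : ℕ → Ω → ℝ)
    (hmeas : ∀ i, Measurable (ξ i))
    (hindep : iIndepFun ξ ℙ)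
    (hident : ∀ i, IdentDistrib (ξ i) (ξ 0) ℙ ℙ)
    (u : ℕ → ℝ) (hu : Monotone u)
    (h0 : Tendsto (fun n : ℕ => ℙ {ω | u n < ξ 0 ω}) atTop (nhds 0))
    (hfin : liminf (fun n : ℕ => (n : ENNReal) * ℙ {ω | u n < ξ 0 ω}) atTop < ⊤) :
    ℙ (limsup (fun n => {ω | ∀ i < n, ξ i ω ≤ u n}) atTop) = 1 := by
  set S : ℕ → Set ℝ := fun n => Set.Iic (u n)
  have hS : ∀ n, MeasurableSet (S n) := fun n => measurableSet_Iic
  have hS_mono : Monotone S := fun _ _ h => Set.Iic_subset_Iic.mpr (hu h)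
  have hcompl : ∀ n, ξ 0 ⁻¹' (S n)ᶜ = {ω | u n < ξ 0 ω} := fun n => by ext; simp [S]
  have hevent : (fun n => {ω | ∀ i < n, ξ i ω ≤ u n}) = fun n => blockEvent ξ S 0 n := by
    ext n ω; simp [S]
  have hprob : ∀ n, ℙ (blockEvent ξ S 0 n) = (1 - ℙ {ω | u n < ξ 0 ω}) ^ n := fun n => by
    rw [measure_blockEvent_eq_pow hindep hident hS, Nat.sub_zero, ← hcompl, Set.preimage_compl,
      prob_compl_eq_one_sub ((hmeas 0) (hS n)),
      ENNReal.sub_sub_cancel ENNReal.one_ne_top prob_le_one]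
  have hcover : ∀ᵐ ω ∂ℙ, ∀ i, ∃ k, ξ i ω ∈ S k :=
    ae_forall_exists_mem_of_tendsto hident hS (by simpa only [hcompl] using h0)
  obtain ⟨δ, hδ, hfreq⟩ := exists_pos_frequently_le_one_sub_pow h0 hfin
  have hpos : δ ≤ ℙ (limsup (fun n => blockEvent ξ S 0 n) atTop) :=
    le_measure_limsup_of_frequently_le (measurableSet_blockEvent hmeas hS 0)
      (hfreq.mono fun n hn => (hprob n).symm ▸ hn)
  have hlimsup_eq := measure_congr (limsup_blockEvent_zero_ae_eq_iUnion (μ := ℙ) hS_mono hcover)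
  rw [hevent, hlimsup_eq]
  refine (measure_zero_or_one_of_measurableSet_limsup_atTop (fun i => (hmeas i).comap_le) hindep
    (measurableSet_tail_iUnion_limsup_blockEvent hS)).resolve_left fun hzero => ?_
  exact hδ.ne' (le_zero_iff.mp (hpos.trans (hlimsup_eq.trans hzero).le))
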